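/- arXiv:2602.11908 — 4 statements merged into one kernel-verified Lean document; each statement's English description precedes it below -/
import Mathlib

section
/- Let X_1, …, X_{n+1} be exchangeable, almost surely pairwise distinct real-valued random variables. Then the rank of X_{n+1} among all n+1 variables is uniformly distributed: for every j ∈ {1, …, n+1}, the probability that exactly j of the variables X_1, …, X_{n+1} are ≤ X_{n+1} equals 1/(n+1). -/
/-!
On the event that the `X i` are pairwise distinct (which has full measure), `k ↦ rank k` is a
bijection onto `{1, …, n+1}`, so for each `j` exactly one of the events `{rank k = j}` occurs.
Hence these `n + 1` events have total probability `1`, and by exchangeability (a transposition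
moves `k` to the last index) they all have the same probability.
-/

open MeasureTheory ProbabilityTheory Finset Function

section Rank

variable {ι α : Type*} [Fintype ι] [LinearOrder α]

def rank (x : ι → α) (k : ι) : ℕ := #{i | x i ≤ x k}

lemma rank_comp_perm (x : ι → α) (σ : Equiv.Perm ι) (k : ι) :
    rank (x ∘ σ) k = rank x (σ k) :=
  card_equiv σ (by simp)

lemma rank_lt_rank (x : ι → α) {k l : ι} (h : x k < x l) : rank x k < rank x l :=
  card_lt_card ⟨fun i hi => by
      simp only [mem_filter, mem_univ, true_and] at hi ⊢
      exact hi.trans h.le,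
    fun hsub => (not_le.2 h) (mem_filter.1 (hsub (by simp))).2⟩

lemma rank_injective {x : ι → α} (hx : Injective x) : Injective (rank x) := by
  intro k l h
  by_contra hkl
  rcases (hx.ne hkl).lt_or_gt with hlt | hlt
  exacts [(rank_lt_rank x hlt).ne h, (rank_lt_rank x hlt).ne' h]

lemma rank_mem_Icc (x : ι → α) (k : ι) : rank x k ∈ Icc 1 (Fintype.card ι) :=
  mem_Icc.2 ⟨card_pos.2 ⟨k, by simp⟩, card_le_univ _⟩

lemma card_rank_eq_one {x : ι → α} (hx : Injective x) {j : ℕ}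
    (hj : j ∈ Icc 1 (Fintype.card ι)) : #{k | rank x k = j} = 1 := by
  have himage : univ.image (rank x) = Icc 1 (Fintype.card ι) :=
    eq_of_subset_of_card_le (image_subset_iff.2 fun k _ => rank_mem_Icc x k)
      (by rw [Nat.card_Icc, card_image_of_injective _ (rank_injective hx)]; simp)
  obtain ⟨k, -, rfl⟩ := mem_image.1 (himage ▸ hj)
  exact card_eq_one.2 ⟨k, by ext l; simp [(rank_injective hx).eq_iff]⟩

end Rank

section Probability

variable {ι Ω α : Type*} [MeasurableSpace Ω] {μ : Measure Ω}

def Exchangeable [Fintype ι] [MeasurableSpace α] (μ : Measure Ω) (X : ι → Ω → α) :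
    Prop :=
  ∀ σ : Equiv.Perm ι, μ.map (fun ω i => X (σ i) ω) = μ.map (fun ω i => X i ω)

lemma ae_injective_of_measure_eq_zero [Countable ι] {X : ι → Ω → α}
    (h : ∀ i j, i ≠ j → μ {ω | X i ω = X j ω} = 0) :
    ∀ᵐ ω ∂μ, Injective (X · ω) := by
  have hne : ∀ᵐ ω ∂μ, ∀ i j, i ≠ j → X i ω ≠ X j ω := by
    refine ae_all_iff.2 fun i => ae_all_iff.2 fun j => ?_
    by_cases hij : i = j
    · exact Filter.Eventually.of_forall fun _ h => absurd hij h
    · exact (measure_eq_zero_iff_ae_notMem.1 (h i j hij)).mono fun _ hω _ => hω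
  exact hne.mono fun ω hω i j hij => by_contra fun hne => hω i j hne hij

variable [Fintype ι] [LinearOrder α] [TopologicalSpace α] [OrderClosedTopology α]
  [SecondCountableTopology α] [MeasurableSpace α] [OpensMeasurableSpace α]

lemma measurable_rank (k : ι) : Measurable fun x : ι → α => rank x k := by
  classical
  simp only [rank, card_filter]
  exact Finset.measurable_sum _ fun i _ => Measurable.ite
    (measurableSet_le (measurable_pi_apply i) (measurable_pi_apply k)) measurable_const
    measurable_const

lemma measurableSet_rank_eq {X : ι → Ω → α} (hX : ∀ i, Measurable (X i))
    (k : ι) (j : ℕ) :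
    MeasurableSet {ω | rank (X · ω) k = j} :=
  (measurable_rank k).comp (measurable_pi_lambda _ hX) (measurableSet_singleton j)

lemma Exchangeable.measure_rank_eq {X : ι → Ω → α} (hexch : Exchangeable μ X)
    (hX : ∀ i, Measurable (X i)) (k l : ι) (j : ℕ) :
    μ {ω | rank (X · ω) k = j} = μ {ω | rank (X · ω) l = j} := by
  classical
  have hS : MeasurableSet {x : ι → α | rank x l = j} :=
    measurable_rank l (measurableSet_singleton j)
  have hpre : (fun ω i => X (Equiv.swap k l i) ω) ⁻¹' {x | rank x l = j}
      = {ω | rank (X · ω) k = j} := by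
    ext ω
    change rank ((X · ω) ∘ Equiv.swap k l) l = j ↔ rank (X · ω) k = j
    rw [rank_comp_perm, Equiv.swap_apply_right]
  have h := congrArg (· {x | rank x l = j}) (hexch (Equiv.swap k l))
  rwa [Measure.map_apply (by fun_prop) hS, Measure.map_apply (by fun_prop) hS, hpre] at h

lemma sum_measure_rank_eq {X : ι → Ω → α} (hX : ∀ i, Measurable (X i))
    (hinj : ∀ᵐ ω ∂μ, Injective (X · ω)) {j : ℕ} (hj : j ∈ Icc 1 (Fintype.card ι)) :
    ∑ k, μ {ω | rank (X · ω) k = j} = μ Set.univ := by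
  calc ∑ k, μ {ω | rank (X · ω) k = j}
      = ∑ k, ∫⁻ ω, {ω | rank (X · ω) k = j}.indicator 1 ω ∂μ := by
        simp only [lintegral_indicator_one (measurableSet_rank_eq hX _ j)]
    _ = ∫⁻ ω, ∑ k, {ω | rank (X · ω) k = j}.indicator 1 ω ∂μ :=
        (lintegral_finsetSum _ fun k _ =>
          measurable_one.indicator (measurableSet_rank_eq hX k j)).symm
    _ = ∫⁻ _, 1 ∂μ := lintegral_congr_ae <| hinj.mono fun ω hω => by
        simp only [Set.indicator_apply, Set.mem_ofPred_eq, Pi.one_apply]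
        rw [sum_boole, card_rank_eq_one hω hj, Nat.cast_one]
    _ = μ Set.univ := lintegral_one

end Probability

/-- If `X 0, …, X n` are exchangeable, almost surely pairwise distinct
real-valued random variables, then the rank of the last one among all `n + 1` variables is
uniform: for every `j ∈ {1, …, n+1}`, the probability that exactly `j` of the variables
are `≤ X (Fin.last n)` equals `1 / (n + 1)`. -/
theorem rank_of_last_uniform
    {Ω : Type*} [MeasurableSpace Ω] (μ : Measure Ω) [IsProbabilityMeasure μ]
    (n : ℕ) (X : Fin (n + 1) → Ω → ℝ) (hmeas : ∀ i, Measurable (X i))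
    (hexch : ∀ σ : Equiv.Perm (Fin (n + 1)),
      Measure.map (fun ω => fun i => X (σ i) ω) μ = Measure.map (fun ω => fun i => X i ω) μ)
    (hdist : ∀ i j, i ≠ j → μ {ω | X i ω = X j ω} = 0) :
    ∀ j ∈ Finset.Icc 1 (n + 1),
      μ {ω | (Finset.univ.filter fun i => X i ω ≤ X (Fin.last n) ω).card = j}
        = 1 / (n + 1) := by
  intro j hj
  have hsum := sum_measure_rank_eq hmeas (ae_injective_of_measure_eq_zero hdist)
    (by rwa [Fintype.card_fin])
  simp only [Exchangeable.measure_rank_eq hexch hmeas _ (Fin.last n), sum_const, card_univ,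
    Fintype.card_fin, nsmul_eq_mul, measure_univ] at hsum
  change μ {ω | rank (X · ω) (Fin.last n) = j} = _
  rw [ENNReal.eq_div_iff (by simp) (by simp)]
  exact_mod_cast hsum
end

section
/- Let X_1, …, X_{n+1} be exchangeable, almost surely pairwise distinct real-valued random variables, and for 1 ≤ k ≤ n let X_{(k)} denote the k-th smallest value among X_1, …, X_n. Then for every integer k with 1 ≤ k ≤ n, P(X_{n+1} ≤ X_{(k)}) = k/(n+1). -/
/-!
Let `r` be the rank of `X_{n+1}` among all `n + 1` variables, i.e. the number of them lying
strictly below it. Then `X_{n+1} ≤ X_{(k)}` exactly when `r < k`. Exchangeability makes the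
events "coordinate `i` has rank `j`" equiprobable in `i`, and almost-sure distinctness makes the
ranks a permutation of `0, …, n`, so for fixed `j` these `n + 1` events partition the sample
space up to a null set. Hence `P(r = j) = 1 / (n + 1)` and `P(r < k) = k / (n + 1)`.
-/

open MeasureTheory ProbabilityTheory

/-- The `k`-th smallest value (1-indexed) among the values `f 0, …, f (n-1)`. -/
noncomputable def kthSmallest (n : ℕ) (f : Fin n → ℝ) (k : ℕ) : ℝ :=
  ((Multiset.map f (Finset.univ : Finset (Fin n)).val).sort (· ≤ ·)).getD (k - 1) 0

open Finset
open scoped ENNReal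

theorem List.Pairwise.le_getElem_iff_countP_lt_le {α : Type*} [LinearOrder α] {l : List α}
    (hl : l.Pairwise (· ≤ ·)) (x : α) {i : ℕ} (hi : i < l.length) :
    x ≤ l[i] ↔ l.countP (· < x) ≤ i := by
  induction l generalizing i with
  | nil => simp at hi
  | cons a t ih =>
    rw [List.pairwise_cons] at hl
    cases i with
    | zero =>
      simp only [List.getElem_cons_zero, Nat.le_zero, List.countP_eq_zero, List.mem_cons,
        decide_eq_true_eq, not_lt, forall_eq_or_imp]
      exact ⟨fun hxa => ⟨hxa, fun b hb => hxa.trans (hl.1 b hb)⟩, And.left⟩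
    | succ i =>
      rw [List.getElem_cons_succ, List.countP_cons]
      by_cases hax : a < x
      · simp [hax, ih hl.2]
      · have hxt : ∀ b ∈ t, x ≤ b := fun b hb => (not_lt.1 hax).trans (hl.1 b hb)
        have hzero : t.countP (· < x) = 0 :=
          List.countP_eq_zero.2 fun b hb => by simpa using hxt b hb
        simp [hax, hxt _ (List.getElem_mem _), hzero]

theorem le_kthSmallest_iff {n : ℕ} (f : Fin n → ℝ) (x : ℝ) {k : ℕ} (hk1 : 1 ≤ k) (hkn : k ≤ n) :
    x ≤ kthSmallest n f k ↔ #{i | f i < x} < k := by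
  set l := (Multiset.map f (univ : Finset (Fin n)).val).sort (· ≤ ·)
  have hlen : k - 1 < l.length := by simp [l]; omega
  have hcount : l.countP (· < x) = #{i | f i < x} := by
    rw [← Multiset.coe_countP, Multiset.sort_eq, Multiset.countP_map]; rfl
  rw [kthSmallest, List.getD_eq_getElem _ _ hlen,
    (Multiset.pairwise_sort _ _).le_getElem_iff_countP_lt_le x hlen, hcount]
  omega

section CoordRank

variable {ι α : Type*} [Fintype ι] [LinearOrder α]

def coordRank (f : ι → α) (i : ι) : ℕ := #{m | f m < f i}

theorem coordRank_lt_card (f : ι → α) (i : ι) : coordRank f i < Fintype.card ι :=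
  card_lt_univ_of_notMem (x := i) (by simp)

theorem coordRank_lt_coordRank {f : ι → α} {i j : ι} (h : f i < f j) :
    coordRank f i < coordRank f j :=
  card_lt_card <| (ssubset_iff_of_subset fun m hm => by
    simp only [mem_filter, mem_univ, true_and] at hm ⊢; exact hm.trans h).2
    ⟨i, by simpa using h, by simp⟩

theorem coordRank_injective {f : ι → α} (hf : Function.Injective f) :
    Function.Injective (coordRank f) := by
  intro i j hij
  by_contra hne
  rcases (hf.ne hne).lt_or_gt with h | h
  · exact (coordRank_lt_coordRank h).ne hij
  · exact (coordRank_lt_coordRank h).ne' hij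

theorem exists_coordRank_eq {f : ι → α} (hf : Function.Injective f) {j : ℕ}
    (hj : j < Fintype.card ι) : ∃ i, coordRank f i = j := by
  let r : ι → Fin (Fintype.card ι) := fun i => ⟨coordRank f i, coordRank_lt_card f i⟩
  have hr : Function.Injective r := fun a b h => coordRank_injective hf (congrArg Fin.val h)
  obtain ⟨i, hi⟩ := ((Fintype.bijective_iff_injective_and_card r).2 ⟨hr, by simp⟩).2 ⟨j, hj⟩
  exact ⟨i, congrArg Fin.val hi⟩

theorem coordRank_comp_perm (f : ι → α) (σ : Equiv.Perm ι) (i : ι) :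
    coordRank (f ∘ σ) i = coordRank f (σ i) := by
  simp only [coordRank, card_filter, Function.comp_apply]
  exact Equiv.sum_comp σ fun m => if f m < f (σ i) then 1 else 0

theorem coordRank_last {n : ℕ} (f : Fin (n + 1) → α) :
    coordRank f (Fin.last n) = #{i : Fin n | f i.castSucc < f (Fin.last n)} := by
  rw [coordRank, card_filter, card_filter, Fin.sum_univ_castSucc]
  simp

end CoordRank

theorem measurable_coordRank {ι : Type*} [Fintype ι] (i : ι) :
    Measurable fun f : ι → ℝ => coordRank f i := by
  simp_rw [coordRank, card_filter]
  exact Finset.measurable_sum _ fun m _ => Measurable.ite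
    (measurableSet_lt (measurable_pi_apply m) (measurable_pi_apply i))
    measurable_const measurable_const

theorem measurableSet_setOf_injective {ι : Type*} [Countable ι] :
    MeasurableSet {f : ι → ℝ | Function.Injective f} := by
  simp only [Function.Injective, Set.ofPred_forall, imp_iff_not_or, Set.ofPred_or]
  exact .iInter fun i => .iInter fun j =>
    (measurableSet_eq_fun (measurable_pi_apply i) (measurable_pi_apply j)).compl.union
      (.const _)

theorem ae_injective_of_measure_eq_zero_s1 {ι Ω : Type*} [Countable ι] [MeasurableSpace Ω]
    {μ : Measure Ω} {X : ι → Ω → ℝ} (hdist : ∀ i j, i ≠ j → μ {ω | X i ω = X j ω} = 0) :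
    ∀ᵐ ω ∂μ, Function.Injective fun i => X i ω := by
  have hne : ∀ i j, ∀ᵐ ω ∂μ, X i ω = X j ω → i = j := fun i j => by
    rcases eq_or_ne i j with rfl | hij
    · exact ae_of_all _ fun _ _ => rfl
    · simpa [ae_iff, hij] using hdist i j hij
  filter_upwards [ae_all_iff.2 fun i => ae_all_iff.2 (hne i)] with ω hω i j using hω i j

section PermInvariant

variable {ι : Type*} [Fintype ι] {P : Measure (ι → ℝ)}

theorem measure_coordRank_eq_of_perm_invariant
    (hP : ∀ σ : Equiv.Perm ι, P.map (· ∘ σ) = P) (i i' : ι) (j : ℕ) :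
    P {f | coordRank f i = j} = P {f | coordRank f i' = j} := by
  classical
  set σ := Equiv.swap i i'
  have hσ : Measurable fun f : ι → ℝ => f ∘ σ := by fun_prop
  calc P {f | coordRank f i = j} = P.map (· ∘ σ) {f | coordRank f i = j} := by rw [hP]
    _ = P {f | coordRank f i' = j} := by
      rw [Measure.map_apply hσ (measurableSet_eq_fun (measurable_coordRank i) measurable_const)]
      simp [Set.preimage, coordRank_comp_perm, σ]

theorem measure_coordRank_eq_inv_card [IsProbabilityMeasure P]
    (hP : ∀ σ : Equiv.Perm ι, P.map (· ∘ σ) = P) (hinj : ∀ᵐ f ∂P, Function.Injective f)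
    (i : ι) {j : ℕ} (hj : j < Fintype.card ι) :
    P {f | coordRank f i = j} = (Fintype.card ι : ℝ≥0∞)⁻¹ := by
  set A : ι → Set (ι → ℝ) := fun a => {f | coordRank f a = j}
  have hnull := ae_iff.1 hinj
  have hdisj : Pairwise (Function.onFun (AEDisjoint P) A) := fun a b hab =>
    measure_mono_null (fun f hf hf' => hab (coordRank_injective hf' (hf.1.trans hf.2.symm))) hnull
  have hcover : P (⋃ a, A a) = 1 := by
    rw [measure_congr (ae_eq_univ.2 (measure_mono_null ?_ hnull)), measure_univ]
    intro f hf hf'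
    obtain ⟨a, ha⟩ := exists_coordRank_eq hf' hj
    exact hf (Set.mem_iUnion.2 ⟨a, ha⟩)
  have hsum : ∑ a, P (A a) = 1 := by
    rw [← hcover, measure_iUnion₀ hdisj fun a =>
      (measurableSet_eq_fun (measurable_coordRank a) measurable_const).nullMeasurableSet,
      tsum_fintype (L := SummationFilter.unconditional _)]
  rw [sum_congr rfl fun a _ => measure_coordRank_eq_of_perm_invariant hP a i j, sum_const,
    card_univ, nsmul_eq_mul] at hsum
  exact ENNReal.eq_inv_of_mul_eq_one_left (by rwa [mul_comm])

theorem measure_coordRank_lt [IsProbabilityMeasure P]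
    (hP : ∀ σ : Equiv.Perm ι, P.map (· ∘ σ) = P) (hinj : ∀ᵐ f ∂P, Function.Injective f)
    (i : ι) {k : ℕ} (hk : k ≤ Fintype.card ι) :
    P {f | coordRank f i < k} = k / Fintype.card ι := by
  have hunion : {f : ι → ℝ | coordRank f i < k} = ⋃ j ∈ range k, {f | coordRank f i = j} := by
    ext; simp
  rw [hunion, measure_biUnion_finset
      (fun a _ b _ hab => Set.disjoint_left.2 fun f ha hb => hab (ha.symm.trans hb))
      fun j _ => measurableSet_eq_fun (measurable_coordRank i) measurable_const,
    sum_congr rfl fun j hj => measure_coordRank_eq_inv_card hP hinj i (by simp at hj; omega),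
    sum_const, card_range, nsmul_eq_mul, div_eq_mul_inv]

end PermInvariant

/-- If `X 0, …, X n` are exchangeable, almost surely pairwise distinct
real-valued random variables and `X_{(k)}` denotes the `k`-th smallest among the first `n`
of them, then for every `1 ≤ k ≤ n`, `P(X_{n+1} ≤ X_{(k)}) = k / (n + 1)`. -/
theorem prob_last_le_kth_order_stat
    {Ω : Type*} [MeasurableSpace Ω] (μ : Measure Ω) [IsProbabilityMeasure μ]
    (n : ℕ) (X : Fin (n + 1) → Ω → ℝ) (hmeas : ∀ i, Measurable (X i))
    (hexch : ∀ σ : Equiv.Perm (Fin (n + 1)),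
      Measure.map (fun ω => fun i => X (σ i) ω) μ = Measure.map (fun ω => fun i => X i ω) μ)
    (hdist : ∀ i j, i ≠ j → μ {ω | X i ω = X j ω} = 0)
    (k : ℕ) (hk1 : 1 ≤ k) (hkn : k ≤ n) :
    μ {ω | X (Fin.last n) ω ≤ kthSmallest n (fun i : Fin n => X i.castSucc ω) k}
      = k / (n + 1) := by
  set V : Ω → Fin (n + 1) → ℝ := fun ω i => X i ω
  have hV : Measurable V := measurable_pi_lambda _ hmeas
  have := Measure.isProbabilityMeasure_map (μ := μ) hV.aemeasurable
  have hevent : {ω | X (Fin.last n) ω ≤ kthSmallest n (fun i : Fin n => X i.castSucc ω) k}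
      = V ⁻¹' {f | coordRank f (Fin.last n) < k} := by
    ext ω
    simp [V, le_kthSmallest_iff _ _ hk1 hkn, coordRank_last]
  have hperm : ∀ σ : Equiv.Perm (Fin (n + 1)), (μ.map V).map (· ∘ σ) = μ.map V := fun σ => by
    rw [Measure.map_map (by fun_prop) hV]
    exact hexch σ
  have hinj : ∀ᵐ f ∂μ.map V, Function.Injective f := by
    rw [ae_map_iff hV.aemeasurable measurableSet_setOf_injective]
    exact ae_injective_of_measure_eq_zero_s1 hdist
  rw [hevent, ← Measure.map_apply hV (measurableSet_lt (measurable_coordRank _) measurable_const),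
    measure_coordRank_lt hperm hinj _ (by simp; omega)]
  simp
end

section
/- Let X_1, …, X_{n+1} be exchangeable, almost surely pairwise distinct random variables taking values in the interval [0,1], and let α ∈ (0,1). Define the threshold θ̂ = X_{(⌈(n+1)(1−α)⌉)} (the ⌈(n+1)(1−α)⌉-th smallest of X_1, …, X_n) if α ≥ 1/(n+1), and θ̂ = 1 otherwise. Then P(X_{n+1} ≤ θ̂) ≥ 1 − α. -/
open MeasureTheory ProbabilityTheory
open scoped ENNReal

/-!
Let `r_j` be the number of `X_i` strictly below `X_j`. Among any `m` reals at least `k ≤ m`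
have `r_j < k` (the `k` smallest, counted with multiplicity), so the events `{r_j < k}`, which
all have the same probability by exchangeability, have probabilities summing to at least `k`;
hence `P(r_{n+1} < k) ≥ k / (n + 1)`. On `{r_{n+1} < k}` fewer than `k` of `X_1, …, X_n` lie
strictly below `X_{n+1}`, so `X_{n+1} ≤ X_{(k)}`, and `k = ⌈(n + 1)(1 - α)⌉` gives coverage
`≥ 1 - α`.
-/

open Finset

namespace List

variable {α : Type*} [LinearOrder α] {l : List α}

theorem Pairwise.succ_le_countP_le_getElem (hl : l.Pairwise (· ≤ ·)) {p : ℕ}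
    (hp : p < l.length) :
    p + 1 ≤ l.countP (· ≤ l[p]) := by
  have hle : ∀ x ∈ l.take (p + 1), x ≤ l[p] := by
    intro x hx
    obtain ⟨i, hi, rfl⟩ := mem_take_iff_getElem.1 hx
    exact hl.rel_get_of_le (a := ⟨i, by omega⟩) (b := ⟨p, hp⟩) (Fin.mk_le_mk.2 (by omega))
  refine le_trans (le_of_eq ?_) (take_sublist (p + 1) l).countP_le
  rw [countP_eq_length.2 (by simpa using hle), length_take]
  omega

theorem Pairwise.countP_lt_getElem_le (hl : l.Pairwise (· ≤ ·)) {p : ℕ} (hp : p < l.length) :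
    l.countP (· < l[p]) ≤ p := by
  have hge : ∀ x ∈ l.drop p, l[p] ≤ x := by
    intro x hx
    obtain ⟨i, hi, rfl⟩ := mem_iff_getElem.1 hx
    rw [getElem_drop]
    exact hl.rel_get_of_le (a := ⟨p, hp⟩) (b := ⟨p + i, by rw [length_drop] at hi; omega⟩)
      (Fin.mk_le_mk.2 (by omega))
  calc l.countP (· < l[p]) = (l.take p).countP (· < l[p]) + (l.drop p).countP (· < l[p]) := by
        rw [← countP_append, take_append_drop]
    _ ≤ p + 0 := by
        gcongr
        · exact countP_le_length.trans (length_take_le _ _)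
        · exact (countP_eq_zero.2 fun x hx => by simpa using hge x hx).le
    _ = p := by omega

end List

section kthSmallest

variable {n : ℕ} (w : Fin n → ℝ)

noncomputable def sortedValues : List ℝ :=
  (Multiset.map w (univ : Finset (Fin n)).val).sort (· ≤ ·)

theorem length_sortedValues : (sortedValues w).length = n := by
  simp [sortedValues]

theorem pairwise_sortedValues : (sortedValues w).Pairwise (· ≤ ·) :=
  Multiset.pairwise_sort _ _

theorem card_filter_eq_countP_sortedValues (P : ℝ → Prop) [DecidablePred P] :
    #{i | P (w i)} = (sortedValues w).countP (P ·) := by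
  rw [← Multiset.coe_countP, sortedValues, Multiset.sort_eq, Multiset.countP_map]
  rfl

theorem kthSmallest_eq_getElem {k : ℕ} (hk0 : 0 < k) (hk : k ≤ n) :
    kthSmallest n w k = (sortedValues w)[k - 1]'(by rw [length_sortedValues]; omega) :=
  List.getD_eq_getElem _ _ _

theorem le_card_filter_le_kthSmallest {k : ℕ} (hk : k ≤ n) :
    k ≤ #{i | w i ≤ kthSmallest n w k} := by
  rcases Nat.eq_zero_or_pos k with rfl | hk0
  · exact Nat.zero_le _
  rw [card_filter_eq_countP_sortedValues w (· ≤ kthSmallest n w k),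
    kthSmallest_eq_getElem w hk0 hk]
  have := (pairwise_sortedValues w).succ_le_countP_le_getElem
    (p := k - 1) (by rw [length_sortedValues]; omega)
  omega

theorem card_filter_lt_kthSmallest_lt {k : ℕ} (hk0 : 0 < k) (hk : k ≤ n) :
    #{i | w i < kthSmallest n w k} < k := by
  rw [card_filter_eq_countP_sortedValues w (· < kthSmallest n w k),
    kthSmallest_eq_getElem w hk0 hk]
  have := (pairwise_sortedValues w).countP_lt_getElem_le
    (p := k - 1) (by rw [length_sortedValues]; omega)
  omega

theorem le_kthSmallest_of_card_filter_lt {k : ℕ} (hk : k ≤ n) {t : ℝ}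
    (ht : #{i | w i < t} < k) : t ≤ kthSmallest n w k := by
  by_contra! hlt
  have : #{i | w i ≤ kthSmallest n w k} ≤ #{i | w i < t} :=
    card_le_card fun i hi => by simp only [mem_filter, mem_univ, true_and] at hi ⊢; linarith
  have := le_card_filter_le_kthSmallest w hk
  omega

end kthSmallest

section strictRank

variable {ι : Type*} [Fintype ι]

noncomputable def strictRank (v : ι → ℝ) (j : ι) : ℕ :=
  #{i | v i < v j}

theorem strictRank_comp_perm (v : ι → ℝ) (σ : Equiv.Perm ι) (j : ι) :
    strictRank (v ∘ σ) j = strictRank v (σ j) := by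
  unfold strictRank
  rw [← card_map σ.toEmbedding]
  congr 1
  ext i
  simp

theorem measurable_strictRank (j : ι) : Measurable fun v : ι → ℝ => strictRank v j := by
  simp_rw [strictRank, card_filter]
  exact Finset.measurable_sum _ fun i _ => Measurable.ite
    (measurableSet_lt (measurable_pi_apply i) (measurable_pi_apply j)) measurable_const
    measurable_const

theorem le_card_filter_strictRank_lt {m k : ℕ} (v : Fin m → ℝ) (hk : k ≤ m) :
    k ≤ #{j | strictRank v j < k} := by
  rcases Nat.eq_zero_or_pos k with rfl | hk0
  · exact Nat.zero_le _
  refine (le_card_filter_le_kthSmallest v hk).trans (card_le_card fun j hj => ?_)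
  simp only [mem_filter, mem_univ, true_and] at hj ⊢
  refine lt_of_le_of_lt (card_le_card fun i hi => ?_) (card_filter_lt_kthSmallest_lt v hk0 hk)
  simp only [mem_filter, mem_univ, true_and] at hi ⊢
  exact hi.trans_le hj

end strictRank

theorem sum_measure_eq_lintegral_card {α ι : Type*} [MeasurableSpace α] [Fintype ι]
    (μ : Measure α) {A : ι → Set α} [∀ x, DecidablePred (x ∈ A ·)]
    (hA : ∀ i, MeasurableSet (A i)) :
    ∑ i, μ (A i) = ∫⁻ x, (#{i | x ∈ A i} : ℝ≥0∞) ∂μ := by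
  simp_rw [← lintegral_indicator_one (hA _)]
  rw [← lintegral_finsetSum _ fun i _ => measurable_one.indicator (hA i)]
  congr with x
  simp [Set.indicator_apply, Finset.sum_boole]

section Exchangeable

variable {Ω : Type*} [MeasurableSpace Ω] {μ : Measure Ω}

theorem measure_strictRank_lt_eq {ι : Type*} [Fintype ι] [DecidableEq ι]
    {X : ι → Ω → ℝ} (hmeas : ∀ i, Measurable (X i))
    (hexch : ∀ σ : Equiv.Perm ι,
      Measure.map (fun ω => fun i => X (σ i) ω) μ = Measure.map (fun ω => fun i => X i ω) μ)
    (k : ℕ) (j j' : ι) :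
    μ {ω | strictRank (X · ω) j < k} = μ {ω | strictRank (X · ω) j' < k} := by
  have hS : MeasurableSet {v : ι → ℝ | strictRank v j' < k} :=
    measurable_strictRank j' measurableSet_Iio
  have hpre : {ω | strictRank (X · ω) j < k} =
      (fun ω i => X (Equiv.swap j j' i) ω) ⁻¹' {v | strictRank v j' < k} := by
    ext ω
    change _ ↔ strictRank ((X · ω) ∘ Equiv.swap j j') j' < k
    rw [strictRank_comp_perm, Equiv.swap_apply_right]
    rfl
  rw [hpre, ← Measure.map_apply (measurable_pi_lambda _ fun i => hmeas _) hS, hexch,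
    Measure.map_apply (measurable_pi_lambda _ hmeas) hS]
  rfl

theorem natCast_le_mul_measure_strictRank_lt [IsProbabilityMeasure μ] {m k : ℕ}
    {X : Fin m → Ω → ℝ} (hmeas : ∀ i, Measurable (X i))
    (hexch : ∀ σ : Equiv.Perm (Fin m),
      Measure.map (fun ω => fun i => X (σ i) ω) μ = Measure.map (fun ω => fun i => X i ω) μ)
    (hk : k ≤ m) (j : Fin m) :
    (k : ℝ≥0∞) ≤ m * μ {ω | strictRank (X · ω) j < k} := by
  have hA : ∀ i, MeasurableSet {ω | strictRank (X · ω) i < k} := fun i =>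
    (measurable_strictRank i).comp (measurable_pi_lambda _ hmeas) measurableSet_Iio
  calc (k : ℝ≥0∞) = ∫⁻ _, (k : ℝ≥0∞) ∂μ := by simp
    _ ≤ ∫⁻ ω, (#{i | strictRank (X · ω) i < k} : ℝ≥0∞) ∂μ :=
        lintegral_mono fun ω => Nat.cast_le.2 (le_card_filter_strictRank_lt _ hk)
    _ = ∑ i, μ {ω | strictRank (X · ω) i < k} :=
        (sum_measure_eq_lintegral_card μ hA).symm
    _ = m * μ {ω | strictRank (X · ω) j < k} := by
        simp [measure_strictRank_lt_eq hmeas hexch k _ j]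

end Exchangeable

theorem le_kthSmallest_of_strictRank_last_lt {n k : ℕ} (v : Fin (n + 1) → ℝ) (hk : k ≤ n)
    (h : strictRank v (Fin.last n) < k) :
    v (Fin.last n) ≤ kthSmallest n (fun i => v i.castSucc) k := by
  refine le_kthSmallest_of_card_filter_lt _ hk (lt_of_le_of_lt ?_ h)
  exact card_le_card_of_injOn Fin.castSucc (fun i hi => by simpa using hi)
    (Fin.castSucc_injective n).injOn

theorem calibrated_threshold_coverage_lower_bound_general
    {Ω : Type*} [MeasurableSpace Ω] (μ : Measure Ω) [IsProbabilityMeasure μ]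
    (n : ℕ) (X : Fin (n + 1) → Ω → ℝ) (hmeas : ∀ i, Measurable (X i))
    (hrange : ∀ i ω, X i ω ∈ Set.Icc (0 : ℝ) 1)
    (hexch : ∀ σ : Equiv.Perm (Fin (n + 1)),
      Measure.map (fun ω => fun i => X (σ i) ω) μ = Measure.map (fun ω => fun i => X i ω) μ)
    (α : ℝ) (hα : α ∈ Set.Ioo (0 : ℝ) 1) :
    ENNReal.ofReal (1 - α) ≤
      μ {ω | X (Fin.last n) ω ≤
        if 1 / ((n : ℝ) + 1) ≤ α then
          kthSmallest n (fun i : Fin n => X i.castSucc ω) ⌈((n : ℝ) + 1) * (1 - α)⌉₊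
        else 1} := by
  by_cases hcond : 1 / ((n : ℝ) + 1) ≤ α
  · simp only [hcond, if_true]
    set k := ⌈((n : ℝ) + 1) * (1 - α)⌉₊
    have hn : (0 : ℝ) < n + 1 := by positivity
    have hk : k ≤ n := by
      rw [Nat.ceil_le]
      rw [div_le_iff₀ hn] at hcond
      linarith
    have hcover : {ω | strictRank (X · ω) (Fin.last n) < k} ⊆
        {ω | X (Fin.last n) ω ≤ kthSmallest n (fun i : Fin n => X i.castSucc ω) k} :=
      fun ω hω => le_kthSmallest_of_strictRank_last_lt _ hk hω
    refine (ENNReal.mul_le_mul_iff_right (Nat.cast_ne_zero.2 n.succ_ne_zero)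
      (ENNReal.natCast_ne_top (n + 1))).1 ?_
    calc ((n + 1 : ℕ) : ℝ≥0∞) * ENNReal.ofReal (1 - α)
        = ENNReal.ofReal ((n + 1) * (1 - α)) := by
          rw [ENNReal.ofReal_mul hn.le]
          norm_cast
      _ ≤ k := ENNReal.ofReal_le_of_le_toReal (by simpa using Nat.le_ceil _)
      _ ≤ (n + 1 : ℕ) * μ {ω | strictRank (X · ω) (Fin.last n) < k} :=
          natCast_le_mul_measure_strictRank_lt hmeas hexch (by omega) _
      _ ≤ _ := mul_le_mul_right (measure_mono hcover) _
  · simp only [hcond, if_false, (hrange _ _).2, Set.ofPred_true, measure_univ]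
    exact ENNReal.ofReal_le_one.2 (by linarith [hα.1])

/-- For exchangeable, a.s. pairwise distinct `[0,1]`-valued
`X 0, …, X n` and `α ∈ (0,1)`, with threshold `θ̂ = X_{(⌈(n+1)(1-α)⌉)}` if `α ≥ 1/(n+1)`
and `θ̂ = 1` otherwise, we have `P(X_{n+1} ≤ θ̂) ≥ 1 - α`. -/
theorem calibrated_threshold_coverage_lower_bound
    {Ω : Type*} [MeasurableSpace Ω] (μ : Measure Ω) [IsProbabilityMeasure μ]
    (n : ℕ) (X : Fin (n + 1) → Ω → ℝ) (hmeas : ∀ i, Measurable (X i))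
    (hrange : ∀ i ω, X i ω ∈ Set.Icc (0 : ℝ) 1)
    (hexch : ∀ σ : Equiv.Perm (Fin (n + 1)),
      Measure.map (fun ω => fun i => X (σ i) ω) μ = Measure.map (fun ω => fun i => X i ω) μ)
    (hdist : ∀ i j, i ≠ j → μ {ω | X i ω = X j ω} = 0)
    (α : ℝ) (hα : α ∈ Set.Ioo (0 : ℝ) 1) :
    ENNReal.ofReal (1 - α) ≤
      μ {ω | X (Fin.last n) ω ≤
        if 1 / ((n : ℝ) + 1) ≤ α then
          kthSmallest n (fun i : Fin n => X i.castSucc ω) ⌈((n : ℝ) + 1) * (1 - α)⌉₊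
        else 1} :=
  calibrated_threshold_coverage_lower_bound_general μ n X hmeas hrange hexch α hα
end

section
/- Let θ_1, …, θ_n be independent identically distributed real random variables whose common cumulative distribution function F is continuous, and let θ_{(k)} denote the k-th smallest among θ_1, …, θ_n for 1 ≤ k ≤ n. Then the conformal coverage C = F(θ_{(k)}) has the Beta(k, n+1−k) distribution; explicitly, for every t ∈ [0,1], P(C ≤ t) = ∑_{j=k}^{n} (n choose j) t^j (1−t)^{n−j}. -/
open MeasureTheory ProbabilityTheory
open scoped ENNReal

/-!
For `t ≥ 0` the condition `F y ≤ t` is down-closed in `y`, so on a sorted list it holds exactly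
on a prefix: `F θ_(k) ≤ t` iff at least `k` of the `θ i` satisfy it. Since the CDF is continuous,
each `θ i` satisfies it with probability exactly `t` (probability integral transform), and by
independence the number of indices that do is binomially distributed with parameters `n`, `t`.
-/

open Finset Filter
open scoped Topology

theorem List.Pairwise.lt_countP_iff_of_antitone {α : Type*} [Preorder α] {p : α → Prop}
    [DecidablePred p] (hp : Antitone p) {l : List α} (hl : l.Pairwise (· ≤ ·)) {m : ℕ}
    (hm : m < l.length) : m < l.countP (p ·) ↔ p l[m] := by
  induction l generalizing m with
  | nil => simp at hm
  | cons a l ih =>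
    obtain ⟨ha_le, hl⟩ := List.pairwise_cons.mp hl
    by_cases ha : p a
    · rw [List.countP_cons_of_pos (by simpa using ha)]
      cases m with
      | zero => simpa using ha
      | succ m =>
        simpa using ih hl (by simpa using hm)
    · have hnot : ∀ b ∈ a :: l, ¬ p b := fun b hb hpb => ha <| by
        rcases List.mem_cons.mp hb with rfl | hb
        exacts [hpb, hp (ha_le b hb) hpb]
      rw [List.countP_eq_zero.mpr (by simpa using hnot)]
      simpa using hnot _ (List.getElem_mem hm)

theorem Antitone.apply_kthSmallest_iff {p : ℝ → Prop} [DecidablePred p] (hp : Antitone p)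
    {n k : ℕ} (f : Fin n → ℝ) (hk1 : 1 ≤ k) (hkn : k ≤ n) :
    p (kthSmallest n f k) ↔ k ≤ #(univ.filter fun i => p (f i)) := by
  set l := (Multiset.map f (univ : Finset (Fin n)).val).sort (· ≤ ·)
  have hlen : l.length = n := by simp [l]
  have hm : k - 1 < l.length := by omega
  have hcount : l.countP (p ·) = #(univ.filter fun i => p (f i)) := by
    rw [← Multiset.coe_countP, Multiset.sort_eq, Multiset.countP_map, ← Finset.filter_val]
    rfl
  rw [kthSmallest, List.getD_eq_getElem l 0 hm,
    ← (Multiset.pairwise_sort _ _).lt_countP_iff_of_antitone hp hm, hcount]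
  omega

theorem measure_setOf_cdf_le {ν : Measure ℝ} [IsProbabilityMeasure ν] (hcont : Continuous (cdf ν))
    {t : ℝ} (ht0 : 0 ≤ t) (ht1 : t ≤ 1) : ν {x | cdf ν x ≤ t} = ENNReal.ofReal t := by
  set s := {x | cdf ν x ≤ t}
  rcases ht1.eq_or_lt with rfl | ht1
  · simp [s, cdf_le_one]
  have hbdd : BddAbove s := by
    obtain ⟨b, hb⟩ := ((tendsto_cdf_atTop ν).eventually (lt_mem_nhds ht1)).exists
    exact ⟨b, fun x hx => le_of_not_gt fun hbx => (hx.trans_lt hb).not_ge (monotone_cdf ν hbx.le)⟩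
  have hle_of_notMem : ∀ x ∉ s, t ≤ cdf ν x := fun x hx => (not_le.mp hx).le
  rcases s.eq_empty_or_nonempty with hs | hne
  · have : t ≤ 0 := ge_of_tendsto' (tendsto_cdf_atBot ν) fun x => hle_of_notMem x (by simp [hs])
    rw [hs, measure_empty, ENNReal.ofReal_of_nonpos this]
  set q := sSup s
  -- Right-continuity at `q = sup s`, where `cdf ν > t` just to the right, forces `cdf ν q = t`.
  have hq : cdf ν q = t := by
    refine le_antisymm ((isClosed_le hcont continuous_const).csSup_mem hne hbdd) ?_
    refine ge_of_tendsto (hcont.continuousWithinAt (s := Set.Ioi q)) ?_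
    exact eventually_nhdsWithin_of_forall fun x hx =>
      hle_of_notMem x fun hxs => (le_csSup hbdd hxs).not_gt hx
  have hsq : s = Set.Iic q :=
    Set.ext fun x => ⟨fun hx => le_csSup hbdd hx, fun hx => (monotone_cdf ν hx).trans hq.le⟩
  rw [hsq, ← ofReal_cdf, hq]

theorem cdf_map_eq_max {Ω : Type*} [MeasurableSpace Ω] {μ : Measure Ω} [IsProbabilityMeasure μ]
    {X : Ω → ℝ} (hX : Measurable X) {F : ℝ → ℝ}
    (hF : ∀ x, μ {ω | X ω ≤ x} = ENNReal.ofReal (F x)) (x : ℝ) :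
    cdf (μ.map X) x = max (F x) 0 := by
  have := Measure.isProbabilityMeasure_map (μ := μ) hX.aemeasurable
  rw [cdf_eq_real, measureReal_def, Measure.map_apply hX measurableSet_Iic]
  exact (congrArg ENNReal.toReal (hF x)).trans ENNReal.toReal_ofReal'

theorem monotone_max_zero_of_cdf {Ω : Type*} [MeasurableSpace Ω] {μ : Measure Ω}
    [IsProbabilityMeasure μ] {X : Ω → ℝ} (hX : Measurable X) {F : ℝ → ℝ}
    (hF : ∀ x, μ {ω | X ω ≤ x} = ENNReal.ofReal (F x)) :
    Monotone fun x => max (F x) 0 :=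
  funext (cdf_map_eq_max hX hF) ▸ monotone_cdf _

theorem measure_preimage_setOf_le {Ω : Type*} [MeasurableSpace Ω] {μ : Measure Ω}
    [IsProbabilityMeasure μ] {X : Ω → ℝ} (hX : Measurable X) {F : ℝ → ℝ} (hFc : Continuous F)
    (hF : ∀ x, μ {ω | X ω ≤ x} = ENNReal.ofReal (F x)) {t : ℝ} (ht0 : 0 ≤ t) (ht1 : t ≤ 1) :
    μ (X ⁻¹' {y | F y ≤ t}) = ENNReal.ofReal t := by
  have := Measure.isProbabilityMeasure_map (μ := μ) hX.aemeasurable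
  have hcdf : cdf (μ.map X) = fun x => max (F x) 0 := funext (cdf_map_eq_max hX hF)
  have hset : {y | F y ≤ t} = {y | cdf (μ.map X) y ≤ t} := by
    ext y
    simp [hcdf, ht0]
  rw [← Measure.map_apply hX (measurableSet_le hFc.measurable measurable_const), hset]
  exact measure_setOf_cdf_le (by rw [hcdf]; fun_prop) ht0 ht1

theorem Finset.prod_ite_mem_univ {ι M : Type*} [Fintype ι] [DecidableEq ι] [CommMonoid M]
    (S : Finset ι) (a b : M) :
    ∏ i, (if i ∈ S then a else b) = a ^ #S * b ^ (Fintype.card ι - #S) := by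
  rw [prod_ite, prod_const, prod_const, filter_mem_eq_of_subset (subset_univ S), filter_not,
    filter_mem_eq_of_subset (subset_univ S), card_univ_sdiff]

section BinomialCount

variable {Ω β ι : Type*} [Fintype ι] [DecidableEq ι] {X : ι → Ω → β} {s : Set β}
  [DecidablePred (· ∈ s)]

theorem setOf_filter_mem_eq_iInter (S : Finset ι) :
    {ω | univ.filter (fun i => X i ω ∈ s) = S} = ⋂ i, X i ⁻¹' (if i ∈ S then s else sᶜ) := by
  ext ω
  simp only [Set.mem_ofPred_eq, Finset.ext_iff, Finset.mem_filter, Finset.mem_univ, true_and,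
    Set.mem_iInter, Set.mem_preimage]
  refine forall_congr' fun i => ?_
  split_ifs with hi <;> simp [hi]

variable [MeasurableSpace Ω] [MeasurableSpace β] {μ : Measure Ω} [IsProbabilityMeasure μ]
  {p : ℝ≥0∞}

theorem measure_filter_mem_eq (hX : ∀ i, Measurable (X i)) (hind : iIndepFun X μ)
    (hs : MeasurableSet s) (hp : ∀ i, μ (X i ⁻¹' s) = p) (S : Finset ι) :
    μ {ω | univ.filter (fun i => X i ω ∈ s) = S} = p ^ #S * (1 - p) ^ (Fintype.card ι - #S) := by
  have hsets : ∀ i, MeasurableSet (if i ∈ S then s else sᶜ) := fun i => by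
    split_ifs <;> simp [hs]
  have hfactor : ∀ i, μ (X i ⁻¹' (if i ∈ S then s else sᶜ)) = if i ∈ S then p else 1 - p := by
    intro i
    split_ifs
    · exact hp i
    · rw [Set.preimage_compl, prob_compl_eq_one_sub (hX i hs), hp i]
  calc μ {ω | univ.filter (fun i => X i ω ∈ s) = S}
      = μ (⋂ i ∈ (Finset.univ : Finset ι), X i ⁻¹' (if i ∈ S then s else sᶜ)) := by
        simp [setOf_filter_mem_eq_iInter]
    _ = ∏ i, (if i ∈ S then p else 1 - p) := by
        rw [hind.measure_inter_preimage_eq_mul univ fun i _ => hsets i]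
        exact prod_congr rfl fun i _ => hfactor i
    _ = _ := prod_ite_mem_univ S p (1 - p)

theorem measure_le_card_filter_mem (hX : ∀ i, Measurable (X i)) (hind : iIndepFun X μ)
    (hs : MeasurableSet s) (hp : ∀ i, μ (X i ⁻¹' s) = p) (k : ℕ) :
    μ {ω | k ≤ #(univ.filter fun i => X i ω ∈ s)}
      = ∑ j ∈ Icc k (Fintype.card ι),
          (Fintype.card ι).choose j * p ^ j * (1 - p) ^ (Fintype.card ι - j) := by
  set n := Fintype.card ι
  set g := fun ω => univ.filter fun i => X i ω ∈ s
  have hfiber : ∀ S, MeasurableSet (g ⁻¹' {S}) := fun S => by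
    change MeasurableSet {ω | g ω = S}
    rw [setOf_filter_mem_eq_iInter]
    exact .iInter fun i => hX i (by split_ifs <;> simp [hs])
  have hT : {ω | k ≤ #(g ω)} = g ⁻¹' ↑((Icc k n).biUnion (powersetCard · (univ : Finset ι))) := by
    ext ω
    simp only [Set.mem_ofPred_eq, Set.mem_preimage, mem_coe, mem_biUnion, mem_Icc,
      mem_powersetCard, subset_univ, true_and]
    exact ⟨fun h => ⟨_, ⟨h, card_le_univ _⟩, rfl⟩, by rintro ⟨j, ⟨hkj, -⟩, rfl⟩; exact hkj⟩
  rw [hT, ← sum_measure_preimage_singleton _ fun S _ => hfiber S,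
    sum_biUnion fun i _ j _ hij => pairwise_disjoint_powersetCard univ hij]
  refine sum_congr rfl fun j _ => ?_
  calc ∑ S ∈ powersetCard j univ, μ (g ⁻¹' {S})
      = ∑ S ∈ powersetCard j (univ : Finset ι), p ^ j * (1 - p) ^ (n - j) :=
        sum_congr rfl fun S hS => by
          rw [← (mem_powersetCard.mp hS).2]
          exact measure_filter_mem_eq hX hind hs hp S
    _ = n.choose j * p ^ j * (1 - p) ^ (n - j) := by
        rw [sum_const, card_powersetCard, card_univ, nsmul_eq_mul, mul_assoc]

end BinomialCount

/-- If `θ 0, …, θ (n-1)` are i.i.d. real random variables with common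
continuous CDF `F`, then the conformal coverage `C = F(θ_{(k)})` has the `Beta(k, n+1-k)`
distribution: for every `t ∈ [0,1]`,
`P(C ≤ t) = ∑_{j=k}^{n} (n choose j) t^j (1-t)^(n-j)`. -/
theorem coverage_beta_distribution
    {Ω : Type*} [MeasurableSpace Ω] (μ : Measure Ω) [IsProbabilityMeasure μ]
    (n : ℕ) (θ : Fin n → Ω → ℝ) (hmeas : ∀ i, Measurable (θ i))
    (hindep : iIndepFun θ μ)
    (F : ℝ → ℝ) (hF : Continuous F)
    (hcdf : ∀ i x, μ {ω | θ i ω ≤ x} = ENNReal.ofReal (F x))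
    (k : ℕ) (hk1 : 1 ≤ k) (hkn : k ≤ n) :
    ∀ t ∈ Set.Icc (0 : ℝ) 1,
      μ {ω | F (kthSmallest n (fun i => θ i ω) k) ≤ t}
        = ENNReal.ofReal
            (∑ j ∈ Finset.Icc k n, (n.choose j : ℝ) * t ^ j * (1 - t) ^ (n - j)) := by
  rintro t ⟨ht0, ht1⟩
  -- `F` itself need not be monotone: `hcdf` says nothing about its negative values.
  have hanti : Antitone (F · ≤ t) := fun y z hyz hz =>
    (max_le_iff.1 ((monotone_max_zero_of_cdf (hmeas ⟨0, by omega⟩) (hcdf _) hyz).trans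
      (max_le hz ht0))).1
  have hevent : {ω | F (kthSmallest n (fun i => θ i ω) k) ≤ t}
      = {ω | k ≤ #(univ.filter fun i => θ i ω ∈ {y | F y ≤ t})} :=
    Set.ext fun ω => hanti.apply_kthSmallest_iff _ hk1 hkn
  rw [hevent, measure_le_card_filter_mem hmeas hindep
      (measurableSet_le hF.measurable measurable_const)
      fun i => measure_preimage_setOf_le (hmeas i) hF (hcdf i) ht0 ht1,
    Fintype.card_fin,
    ENNReal.ofReal_sum_of_nonneg fun j _ => by have := sub_nonneg.2 ht1; positivity]
  refine sum_congr rfl fun j _ => ?_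
  rw [← ENNReal.ofReal_one, ← ENNReal.ofReal_sub _ ht0, ENNReal.ofReal_mul (by positivity),
    ENNReal.ofReal_mul (by positivity), ENNReal.ofReal_pow ht0, ENNReal.ofReal_pow (by linarith),
    ENNReal.ofReal_natCast]
end
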